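/- arXiv:1710.10365 — 2 statements merged into one kernel-verified Lean document; each statement's English description precedes it below -/
import Mathlib

section
/- For every integer $n \geq 2$, $(n-1)! < n^{n - 2/3}$. -/
/-- For every integer `n ≥ 2`, `(n-1)! < n ^ (n - 2/3)`. -/
theorem factorial_lt_rpow (n : ℕ) (hn : 2 ≤ n) :
    (Nat.factorial (n - 1) : ℝ) < (n : ℝ) ^ ((n : ℝ) - 2/3) := by
  induction n, hn using Nat.le_induction with
  | base =>
    norm_num [Nat.factorial]
    have : (1:ℝ) < (2:ℝ) ^ ((4:ℝ)/3) := by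
      apply Real.one_lt_rpow_iff_of_pos (by norm_num) |>.mpr
      norm_num
    simpa using this
  | succ n hn ih =>
    have hn0 : (0:ℝ) < n := by positivity
    have h1 : Nat.factorial (n + 1 - 1) = n * Nat.factorial (n - 1) := by
      simp only [Nat.add_sub_cancel]
      exact (Nat.mul_factorial_pred (by omega)).symm
    rw [h1]
    push_cast
    calc (n:ℝ) * Nat.factorial (n - 1)
        < n * (n:ℝ) ^ ((n:ℝ) - 2/3) := by
          exact mul_lt_mul_of_pos_left ih hn0
      _ = (n:ℝ) ^ ((n:ℝ) + 1/3) := by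
          rw [show ((n:ℝ) + 1/3) = 1 + ((n:ℝ) - 2/3) by ring,
            Real.rpow_add hn0, Real.rpow_one]
      _ ≤ ((n:ℝ) + 1) ^ ((n:ℝ) + 1/3) := by
          apply Real.rpow_le_rpow (le_of_lt hn0) (by linarith) (by positivity)
      _ = ((n:ℝ) + 1) ^ (((n:ℝ) + 1) - 2/3) := by ring_nf
end

section
/- Let $d \geq 2$ and $q \geq 1$ be real, and set $\alpha = 2(d/2)^{1/2}$. Suppose $J_{d/2-1}(r) \geq \frac{r^{d/2-1}}{2^{d/2-1}\Gamma(d/2)}\left(1 - \frac{r^2}{\alpha^2}\right)$ for $0 \leq r \leq \alpha$. Then $\left(\int_0^\infty |r^{-d/2+1} J_{d/2-1}(r)|^q\, r^{d-1}\,dr\right)^{1/q} \geq \frac{(2^{d-1}(d/2)^{d/2})^{1/q}}{2^{d/2-1}\,\Gamma(d/2)}\left(\frac{\Gamma(q+1)\,\Gamma(d/2)}{\Gamma(q+d/2+1)}\right)^{1/q}$. -/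
open MeasureTheory

/-- The Bessel function of the first kind of order `ν`, defined by its power series. -/
noncomputable def besselJ (ν r : ℝ) : ℝ :=
    ∑' n : ℕ, ((-1) ^ n * (r / 2) ^ (2 * n) / ((n.factorial : ℝ) * Real.Gamma (ν + n + 1))) *
      (r / 2) ^ ν

lemma continuous_rpow_const' {p : ℝ} (hp : 0 ≤ p) : Continuous fun x : ℝ => x ^ p := by
  rcases eq_or_lt_of_le hp with h | h
  · simpa [← h] using continuous_const
  · exact continuous_iff_continuousAt.2 fun x =>
      Real.continuousAt_rpow_const x p (Or.inr h.le)

lemma betaReal (a b : ℝ) (ha : 0 < a) (hb : 0 < b) :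
    ∫ x in (0:ℝ)..1, x ^ (a-1) * (1-x) ^ (b-1) =
      Real.Gamma a * Real.Gamma b / Real.Gamma (a+b) := by
  have h := Complex.Gamma_mul_Gamma_eq_betaIntegral (s := (a:ℂ)) (t := (b:ℂ))
    (by simpa using ha) (by simpa using hb)
  have hcongr : Complex.betaIntegral a b =
      ((∫ x in (0:ℝ)..1, x ^ (a-1) * (1-x) ^ (b-1) : ℝ) : ℂ) := by
    rw [Complex.betaIntegral, ← intervalIntegral.integral_ofReal]
    refine intervalIntegral.integral_congr fun x hx => ?_
    rw [Set.uIcc_of_le (by norm_num)] at hx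
    push_cast
    rw [Complex.ofReal_cpow hx.1, Complex.ofReal_cpow (by linarith [hx.2])]
    push_cast
    ring
  rw [hcongr, ← Complex.ofReal_add, Complex.Gamma_ofReal, Complex.Gamma_ofReal,
    Complex.Gamma_ofReal] at h
  have hne : Real.Gamma (a+b) ≠ 0 := (Real.Gamma_pos_of_pos (by linarith)).ne'
  have h' : Real.Gamma a * Real.Gamma b =
      Real.Gamma (a+b) * ∫ x in (0:ℝ)..1, x ^ (a-1) * (1-x) ^ (b-1) := by exact_mod_cast h
  rw [eq_div_iff hne]; linarith

lemma keyIntegral (d q : ℝ) (hd : 2 ≤ d) (hq : 1 ≤ q) :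
    ∫ s in (0:ℝ)..1, (1 - s^2) ^ q * s ^ (d-1) =
      Real.Gamma (d/2) * Real.Gamma (q+1) / (2 * Real.Gamma (d/2 + (q+1))) := by
  have hd2 : (0:ℝ) < d/2 := by linarith
  have hg : Continuous fun t : ℝ => (1/2 : ℝ) * (t ^ (d/2-1) * (1-t) ^ q) := by
    refine continuous_const.mul (Continuous.mul ?_ ?_)
    · exact continuous_rpow_const' (by linarith)
    · exact (continuous_rpow_const' (by linarith)).comp (continuous_const.sub continuous_id)
  have hsub := intervalIntegral.integral_comp_smul_deriv
    (f := fun s : ℝ => s ^ 2) (f' := fun s : ℝ => 2 * s)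
    (g := fun t : ℝ => (1/2 : ℝ) * (t ^ (d/2-1) * (1-t) ^ q))
    (a := 0) (b := 1)
    (fun x _ => by simpa using (hasDerivAt_pow 2 x))
    (by fun_prop) hg
  have hL : (∫ s in (0:ℝ)..1, (2*s) • ((1/2 : ℝ) * ((s^2) ^ (d/2-1) * (1-s^2) ^ q))) =
      ∫ s in (0:ℝ)..1, (1 - s^2) ^ q * s ^ (d-1) := by
    refine intervalIntegral.integral_congr fun s hs => ?_
    rw [Set.uIcc_of_le (by norm_num)] at hs
    rcases eq_or_lt_of_le hs.1 with h0 | h0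
    · rw [← h0]
      simp [Real.zero_rpow (show d - 1 ≠ 0 by linarith)]
    · have h1 : (s^2 : ℝ) ^ (d/2-1) = s ^ (d-2) := by
        rw [← Real.rpow_natCast s 2, ← Real.rpow_mul h0.le]
        norm_num; ring_nf
      have h2 : s ^ (d-2) * s = s ^ (d-1) := by
        nth_rewrite 2 [← Real.rpow_one s]
        rw [← Real.rpow_add h0]; ring_nf
      rw [smul_eq_mul, h1]
      calc 2*s * (1/2 * (s ^ (d-2) * (1-s^2)^q)) = (1-s^2)^q * (s^(d-2)*s) := by ring
        _ = (1 - s^2) ^ q * s ^ (d-1) := by rw [h2]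
  simp only [Function.comp_def] at hsub
  norm_num at hsub
  rw [← hL]
  norm_num
  rw [hsub]
  have hb := betaReal (d/2) (q+1) hd2 (by linarith)
  simp only [add_sub_cancel_right] at hb
  rw [hb]
  ring

lemma scaledIntegral (d q : ℝ) (hd : 2 ≤ d) (hq : 1 ≤ q) :
    ∫ r in (0:ℝ)..(2*(d/2) ^ ((1:ℝ)/2)),
        (1 - r^2/(2*(d/2) ^ ((1:ℝ)/2))^2) ^ q * r ^ (d-1) =
      (2*(d/2) ^ ((1:ℝ)/2)) ^ d *
        (Real.Gamma (d/2) * Real.Gamma (q+1) / (2 * Real.Gamma (d/2 + (q+1)))) := by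
  set α : ℝ := 2*(d/2) ^ ((1:ℝ)/2) with hαdef
  have hd2 : (0:ℝ) < d/2 := by linarith
  have hα : 0 < α := by positivity
  have hcm := intervalIntegral.integral_comp_mul_left
    (f := fun r : ℝ => (1 - r^2/α^2) ^ q * r ^ (d-1)) (a := 0) (b := 1) (c := α) hα.ne'
  have hcongr : (∫ x in (0:ℝ)..1, (1 - (α*x)^2/α^2) ^ q * (α*x) ^ (d-1)) =
      ∫ x in (0:ℝ)..1, α ^ (d-1) * ((1 - x^2) ^ q * x ^ (d-1)) := by
    refine intervalIntegral.integral_congr fun x hx => ?_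
    rw [Set.uIcc_of_le (by norm_num)] at hx
    have h1 : (α*x)^2/α^2 = x^2 := by field_simp
    rw [h1, Real.mul_rpow hα.le hx.1]
    ring
  rw [hcongr, intervalIntegral.integral_const_mul, keyIntegral d q hd hq] at hcm
  have h2 : α * (α ^ (d-1)) = α ^ d := by
    nth_rewrite 1 [← Real.rpow_one α]
    rw [← Real.rpow_add hα]; ring_nf
  rw [mul_zero, mul_one, smul_eq_mul] at hcm
  have := congrArg (fun y => α * y) hcm
  simp only [← mul_assoc, mul_inv_cancel₀ hα.ne', one_mul] at this
  rw [← h2]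
  exact this.symm

/-- Explicit lower bound for `Λ_{d,q}(0)` from the quadratic approximation of the
Bessel function `J_{d/2-1}`. -/
theorem lambda_zero_lower_bound (d q : ℝ) (hd : 2 ≤ d) (hq : 1 ≤ q)
    (hJ : ∀ r : ℝ, 0 ≤ r → r ≤ 2 * (d/2) ^ ((1 : ℝ)/2) →
      r ^ (d/2 - 1) / (2 ^ (d/2 - 1) * Real.Gamma (d/2)) *
          (1 - r ^ 2 / (2 * (d/2) ^ ((1 : ℝ)/2)) ^ 2) ≤ besselJ (d/2 - 1) r) :
    ENNReal.ofReal
        ((2 ^ (d - 1) * (d/2) ^ (d/2)) ^ (1/q) / (2 ^ (d/2 - 1) * Real.Gamma (d/2)) *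
          (Real.Gamma (q + 1) * Real.Gamma (d/2) / Real.Gamma (q + d/2 + 1)) ^ (1/q)) ≤
      (∫⁻ r in Set.Ioi (0 : ℝ),
          ENNReal.ofReal (|r ^ (-d/2 + 1) * besselJ (d/2 - 1) r| ^ q * r ^ (d - 1))) ^ (1/q) := by
  have hd2 : (0:ℝ) < d/2 := by linarith
  have hq0 : (0:ℝ) < q := by linarith
  set α : ℝ := 2*(d/2) ^ ((1:ℝ)/2) with hαdef
  have hα : 0 < α := by positivity
  set D : ℝ := 2 ^ (d/2 - 1) * Real.Gamma (d/2) with hDdef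
  have hD : 0 < D := by
    have := Real.Gamma_pos_of_pos hd2
    positivity
  set g : ℝ → ℝ := fun r => (1/D) ^ q * ((1 - r^2/α^2) ^ q * r ^ (d-1)) with hgdef
  -- nonnegativity and pointwise bound on Ioc 0 α
  have hgnn : ∀ r ∈ Set.Ioc (0:ℝ) α, 0 ≤ g r := by
    intro r hr
    have h1 : 0 ≤ 1 - r^2/α^2 := by
      have : r^2 ≤ α^2 := by nlinarith [hr.1, hr.2]
      have hα2 : (0:ℝ) < α^2 := by positivity
      rw [sub_nonneg, div_le_one hα2]; exact this
    have := Real.rpow_nonneg h1 q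
    have := Real.rpow_nonneg (le_of_lt hr.1) (d-1)
    positivity
  have hptwise : ∀ r ∈ Set.Ioc (0:ℝ) α,
      g r ≤ |r ^ (-d/2 + 1) * besselJ (d/2 - 1) r| ^ q * r ^ (d-1) := by
    intro r hr
    have hr0 : 0 < r := hr.1
    have h1 : 0 ≤ 1 - r^2/α^2 := by
      have : r^2 ≤ α^2 := by nlinarith [hr.1, hr.2]
      have hα2 : (0:ℝ) < α^2 := by positivity
      rw [sub_nonneg, div_le_one hα2]; exact this
    have hJr := hJ r hr0.le hr.2
    have hmul := mul_le_mul_of_nonneg_left hJr (Real.rpow_nonneg hr0.le (-d/2+1))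
    have hid : r ^ (-d/2+1) * (r ^ (d/2 - 1) / D * (1 - r^2/α^2)) =
        (1/D) * (1 - r^2/α^2) := by
      rw [show r ^ (-d/2+1) * (r ^ (d/2 - 1) / D * (1 - r^2/α^2)) =
          (r ^ (-d/2+1) * r ^ (d/2-1)) * (1/D * (1 - r^2/α^2)) by ring,
        ← Real.rpow_add hr0, show -d/2+1 + (d/2-1) = 0 by ring, Real.rpow_zero, one_mul]
    rw [hid] at hmul
    have h2 : (1/D) * (1 - r^2/α^2) ≤ |r ^ (-d/2 + 1) * besselJ (d/2 - 1) r| :=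
      hmul.trans (le_abs_self _)
    have h3 : ((1/D) * (1 - r^2/α^2)) ^ q ≤ |r ^ (-d/2 + 1) * besselJ (d/2 - 1) r| ^ q :=
      Real.rpow_le_rpow (by positivity) h2 hq0.le
    rw [Real.mul_rpow (by positivity) h1] at h3
    have := mul_le_mul_of_nonneg_right h3 (Real.rpow_nonneg hr0.le (d-1))
    simpa [hgdef, mul_assoc] using this
  -- continuity / integrability of g
  have hgcont : Continuous g := by
    refine continuous_const.mul (Continuous.mul ?_ (continuous_rpow_const' (by linarith)))
    exact (continuous_rpow_const' hq0.le).comp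
      (continuous_const.sub ((continuous_pow 2).div_const _))
  -- the lower-bound lintegral computation
  have hset : (∫⁻ r in Set.Ioc (0:ℝ) α, ENNReal.ofReal (g r)) =
      ENNReal.ofReal (∫ r in Set.Ioc (0:ℝ) α, g r) := by
    rw [← ofReal_integral_eq_lintegral_ofReal (hgcont.integrableOn_Ioc)
      ((ae_restrict_iff' measurableSet_Ioc).2 (Filter.Eventually.of_forall hgnn))]
  have hIocval : (∫ r in Set.Ioc (0:ℝ) α, g r) =
      (1/D) ^ q * (α ^ d *
        (Real.Gamma (d/2) * Real.Gamma (q+1) / (2 * Real.Gamma (d/2 + (q+1))))) := by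
    rw [← intervalIntegral.integral_of_le hα.le]
    rw [hgdef]
    rw [intervalIntegral.integral_const_mul, scaledIntegral d q hd hq]
  have hmono : ENNReal.ofReal ((1/D) ^ q * (α ^ d *
        (Real.Gamma (d/2) * Real.Gamma (q+1) / (2 * Real.Gamma (d/2 + (q+1)))))) ≤
      ∫⁻ r in Set.Ioi (0:ℝ),
        ENNReal.ofReal (|r ^ (-d/2 + 1) * besselJ (d/2 - 1) r| ^ q * r ^ (d - 1)) := by
    rw [← hIocval, ← hset]
    refine le_trans (setLIntegral_mono' measurableSet_Ioc fun r hr =>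
      ENNReal.ofReal_le_ofReal (hptwise r hr)) ?_
    exact lintegral_mono' (Measure.restrict_mono Set.Ioc_subset_Ioi_self le_rfl) le_rfl
  -- final algebraic identification
  have halg : ((1/D) ^ q * (α ^ d *
        (Real.Gamma (d/2) * Real.Gamma (q+1) / (2 * Real.Gamma (d/2 + (q+1)))))) ^ (1/q) =
      (2 ^ (d - 1) * (d/2) ^ (d/2)) ^ (1/q) / D *
        (Real.Gamma (q + 1) * Real.Gamma (d/2) / Real.Gamma (q + d/2 + 1)) ^ (1/q) := by
    have hαd : α ^ d = 2 ^ d * (d/2) ^ (d/2) := by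
      rw [hαdef, Real.mul_rpow (by norm_num) (Real.rpow_nonneg hd2.le _),
        ← Real.rpow_mul hd2.le, show (1:ℝ)/2 * d = d/2 by ring]
    have h2d : (2:ℝ) ^ (d-1) = 2 ^ d / 2 := by
      rw [Real.rpow_sub (by norm_num), Real.rpow_one]
    have hG : 0 < Real.Gamma (q + d/2 + 1) := Real.Gamma_pos_of_pos (by linarith)
    have hG1 : 0 < Real.Gamma (q + 1) := Real.Gamma_pos_of_pos (by linarith)
    have hG2 : 0 < Real.Gamma (d/2) := Real.Gamma_pos_of_pos hd2
    have hX : α ^ d * (Real.Gamma (d/2) * Real.Gamma (q+1) / (2 * Real.Gamma (d/2 + (q+1)))) =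
        2 ^ (d-1) * (d/2) ^ (d/2) *
          (Real.Gamma (q + 1) * Real.Gamma (d/2) / Real.Gamma (q + d/2 + 1)) := by
      rw [hαd, h2d, show d/2 + (q+1) = q + d/2 + 1 by ring]
      ring
    rw [hX, Real.mul_rpow (by positivity)
        (by positivity),
      Real.mul_rpow (by positivity) (by positivity)]
    have hDq : ((1/D : ℝ) ^ q) ^ (1/q) = 1/D := by
      rw [← Real.rpow_mul (by positivity), mul_one_div_cancel hq0.ne', Real.rpow_one]
    rw [hDq]
    ring
  rw [← halg, ← ENNReal.ofReal_rpow_of_nonneg (by positivity) (by positivity)]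
  exact ENNReal.rpow_le_rpow hmono (by positivity)
end
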